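/- Let k ≥ 1 and let G = (V,E) be a graph on n vertices, and let c1, c2 be reals with either (c1 = 1 and c2 ≥ 1) or (c1 ≥ 1 and c2 = 1). If x̃ ∈ {0,1}^{n×k} maximizes H^n_{c1,c2} over {0,1}^{n×k}, then there exists an MkCS-feasible x' ∈ {0,1}^{n×k} with x'_{ir} ≤ x̃_{ir} for all i ∈ [n], r ∈ [k], and Σ_{i∈[n],r∈[k]} x'_{ir} = α_k(G). -/

import Mathlib

open Finset

/-- `x ∈ {0,1}^{n×k}`. -/
def MkBin {n k : ℕ} (x : Fin n → Fin k → ℝ) : Prop :=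
  ∀ i r, x i r = 0 ∨ x i r = 1

/-- The edge set of a finite simple undirected graph, each unordered edge listed once. -/
def SimpleEdges {n : ℕ} (E : Finset (Fin n × Fin n)) : Prop :=
  (∀ p ∈ E, p.1 ≠ p.2) ∧ ∀ p ∈ E, p.swap ∉ E

/-- MkCS-feasibility of `x`. -/
def MkFeas {n k : ℕ} (E : Finset (Fin n × Fin n)) (x : Fin n → Fin k → ℝ) : Prop :=
  (∀ p ∈ E, ∀ r, x p.1 r + x p.2 r ≤ 1) ∧ ∀ i, (∑ r, x i r) ≤ 1

/-- The MkCS objective `Σ_{i,r} x_{ir}`. -/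
def MkObj {n k : ℕ} (x : Fin n → Fin k → ℝ) : ℝ := ∑ i, ∑ r, x i r

/-- Nonlinear-based QUBO objective `H^n_{c1,c2}`. -/
def Hn {n k : ℕ} (c1 c2 : ℝ) (E : Finset (Fin n × Fin n)) (x : Fin n → Fin k → ℝ) : ℝ :=
  MkObj x - c1 * (∑ p ∈ E, ∑ r, x p.1 r * x p.2 r)
    - c2 * (∑ i, ∑ r, ∑ p ∈ Finset.univ.filter (fun p => p ≠ r), x i r * x i p)

/-- `s ∈ {0,1}^{E×k}` (only the values on edges of `E` matter). -/
def SBin {n k : ℕ} (E : Finset (Fin n × Fin n)) (s : Fin n × Fin n → Fin k → ℝ) : Prop :=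
  ∀ p ∈ E, ∀ r, s p r = 0 ∨ s p r = 1

/-- `t ∈ {0,1}^n`. -/
def TBin {n : ℕ} (t : Fin n → ℝ) : Prop := ∀ i, t i = 0 ∨ t i = 1

/-- Linear-based QUBO objective `H^l_{c1,c2}`. -/
def Hl {n k : ℕ} (c1 c2 : ℝ) (E : Finset (Fin n × Fin n))
    (x : Fin n → Fin k → ℝ) (s : Fin n × Fin n → Fin k → ℝ) (t : Fin n → ℝ) : ℝ :=
  MkObj x - c1 * (∑ p ∈ E, ∑ r, (x p.1 r + x p.2 r + s p r - 1) ^ 2)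
    - c2 * (∑ i, ((∑ r, x i r) + t i - 1) ^ 2)



section AuxRepair

variable {n k : ℕ}

lemma bin_nonneg {x : Fin n → Fin k → ℝ} (hx : MkBin x) (i : Fin n) (r : Fin k) :
    (0:ℝ) ≤ x i r := by rcases hx i r with h | h <;> simp [h]

/-- Edge-conflict penalty. -/
def PS1 (E : Finset (Fin n × Fin n)) (x : Fin n → Fin k → ℝ) : ℝ :=
  ∑ p ∈ E, ∑ r, x p.1 r * x p.2 r

/-- Color-conflict penalty. -/
def PS2 (x : Fin n → Fin k → ℝ) : ℝ :=
  ∑ i, ∑ r, ∑ p ∈ Finset.univ.filter (fun p => p ≠ r), x i r * x i p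

lemma Hn_eq (c1 c2 : ℝ) (E : Finset (Fin n × Fin n)) (x : Fin n → Fin k → ℝ) :
    Hn c1 c2 E x = MkObj x - c1 * PS1 E x - c2 * PS2 x := rfl

lemma PS1_nonneg (E : Finset (Fin n × Fin n)) {x : Fin n → Fin k → ℝ} (hx : MkBin x) :
    0 ≤ PS1 E x :=
  Finset.sum_nonneg fun _ _ => Finset.sum_nonneg fun _ _ =>
    mul_nonneg (bin_nonneg hx _ _) (bin_nonneg hx _ _)

lemma PS2_nonneg {x : Fin n → Fin k → ℝ} (hx : MkBin x) : 0 ≤ PS2 x :=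
  Finset.sum_nonneg fun _ _ => Finset.sum_nonneg fun _ _ =>
    Finset.sum_nonneg fun _ _ => mul_nonneg (bin_nonneg hx _ _) (bin_nonneg hx _ _)

lemma Hn_le_obj {c1 c2 : ℝ} (hc1 : 0 ≤ c1) (hc2 : 0 ≤ c2) (E : Finset (Fin n × Fin n))
    {x : Fin n → Fin k → ℝ} (hx : MkBin x) : Hn c1 c2 E x ≤ MkObj x := by
  rw [Hn_eq]
  nlinarith [mul_nonneg hc1 (PS1_nonneg E hx), mul_nonneg hc2 (PS2_nonneg hx)]

lemma PS1_feas_zero (E : Finset (Fin n × Fin n)) {x : Fin n → Fin k → ℝ}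
    (hx : MkBin x) (hf : MkFeas E x) : PS1 E x = 0 := by
  refine Finset.sum_eq_zero fun p hp => Finset.sum_eq_zero fun r _ => ?_
  have h := hf.1 p hp r
  rcases hx p.1 r with h1 | h1 <;> rcases hx p.2 r with h2 | h2 <;>
    simp [h1, h2] at h ⊢
  linarith

lemma PS2_feas_zero (E : Finset (Fin n × Fin n)) {x : Fin n → Fin k → ℝ}
    (hx : MkBin x) (hf : MkFeas E x) : PS2 x = 0 := by
  refine Finset.sum_eq_zero fun i _ => Finset.sum_eq_zero fun r _ =>
    Finset.sum_eq_zero fun p hp => ?_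
  have hpr : p ≠ r := (Finset.mem_filter.mp hp).2
  rcases hx i r with h1 | h1
  · simp [h1]
  rcases hx i p with h2 | h2
  · simp [h2]
  exfalso
  have hsum : x i r + x i p ≤ ∑ q, x i q := by
    rw [← Finset.sum_pair (Ne.symm hpr)]
    exact Finset.sum_le_sum_of_subset_of_nonneg (Finset.subset_univ _)
      fun q _ _ => bin_nonneg hx i q
  have := hf.2 i
  rw [h1, h2] at hsum
  linarith

lemma Hn_feas (c1 c2 : ℝ) (E : Finset (Fin n × Fin n)) {x : Fin n → Fin k → ℝ}
    (hx : MkBin x) (hf : MkFeas E x) : Hn c1 c2 E x = MkObj x := by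
  rw [Hn_eq, PS1_feas_zero E hx hf, PS2_feas_zero E hx hf]; ring

/-- the point obtained by zeroing out one entry -/
def zo (x : Fin n → Fin k → ℝ) (i0 : Fin n) (r0 : Fin k) : Fin n → Fin k → ℝ :=
  fun i r => if i = i0 ∧ r = r0 then 0 else x i r

lemma zo_bin {x : Fin n → Fin k → ℝ} (hx : MkBin x) (i0 : Fin n) (r0 : Fin k) :
    MkBin (zo x i0 r0) := by
  intro i r; unfold zo; split
  · left; rfl
  · exact hx i r

lemma zo_le {x : Fin n → Fin k → ℝ} (hx : MkBin x) (i0 : Fin n) (r0 : Fin k) (i : Fin n)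
    (r : Fin k) : zo x i0 r0 i r ≤ x i r := by
  unfold zo; split
  · exact bin_nonneg hx i r
  · exact le_refl _

lemma zo_self (x : Fin n → Fin k → ℝ) (i0 : Fin n) (r0 : Fin k) : zo x i0 r0 i0 r0 = 0 := by
  simp [zo]

lemma zo_ne (x : Fin n → Fin k → ℝ) {i0 i : Fin n} {r0 r : Fin k}
    (h : ¬(i = i0 ∧ r = r0)) : zo x i0 r0 i r = x i r := by simp [zo, h]

lemma zo_obj {x : Fin n → Fin k → ℝ} {i0 : Fin n} {r0 : Fin k} (h1 : x i0 r0 = 1) :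
    MkObj (zo x i0 r0) = MkObj x - 1 := by
  have hrow : ∀ i : Fin n, (∑ r, zo x i0 r0 i r) = (∑ r, x i r) - (if i = i0 then 1 else 0) := by
    intro i
    by_cases h : i = i0
    · subst h
      have : ∀ r : Fin k, zo x i r0 i r = x i r - (if r = r0 then x i r else 0) := by
        intro r
        by_cases hr : r = r0
        · subst hr; simp [zo]
        · simp [zo, hr]
      rw [Finset.sum_congr rfl fun r _ => this r, Finset.sum_sub_distrib,
        Finset.sum_ite_eq' Finset.univ r0 (fun r => x i r)]
      simp [h1]
    · simp only [h, if_false, sub_zero]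
      exact Finset.sum_congr rfl fun r _ => zo_ne x (by tauto)
  unfold MkObj
  rw [Finset.sum_congr rfl fun i _ => hrow i, Finset.sum_sub_distrib,
    Finset.sum_ite_eq' Finset.univ i0 (fun _ => (1:ℝ))]
  simp

lemma PS1_mono (E : Finset (Fin n × Fin n)) {x y : Fin n → Fin k → ℝ}
    (hx : MkBin x) (hy : MkBin y) (hle : ∀ i r, y i r ≤ x i r) : PS1 E y ≤ PS1 E x :=
  Finset.sum_le_sum fun _ _ => Finset.sum_le_sum fun _ _ =>
    mul_le_mul (hle _ _) (hle _ _) (bin_nonneg hy _ _) (bin_nonneg hx _ _)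

lemma PS2_mono {x y : Fin n → Fin k → ℝ}
    (hx : MkBin x) (hy : MkBin y) (hle : ∀ i r, y i r ≤ x i r) : PS2 y ≤ PS2 x :=
  Finset.sum_le_sum fun _ _ => Finset.sum_le_sum fun _ _ =>
    Finset.sum_le_sum fun _ _ =>
      mul_le_mul (hle _ _) (hle _ _) (bin_nonneg hy _ _) (bin_nonneg hx _ _)

lemma PS1_drop (E : Finset (Fin n × Fin n)) {x : Fin n → Fin k → ℝ} (hx : MkBin x)
    {p0 : Fin n × Fin n} (hp0 : p0 ∈ E) {r0 : Fin k}
    (h1 : x p0.1 r0 = 1) (h2 : x p0.2 r0 = 1) :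
    PS1 E (zo x p0.1 r0) + 1 ≤ PS1 E x := by
  have hy := zo_bin hx p0.1 r0
  have hle := zo_le hx p0.1 r0
  have key : (1:ℝ) ≤ ∑ p ∈ E, (∑ r, (x p.1 r * x p.2 r - zo x p0.1 r0 p.1 r * zo x p0.1 r0 p.2 r)) := by
    have hterm : ∀ p ∈ E, 0 ≤ ∑ r, (x p.1 r * x p.2 r - zo x p0.1 r0 p.1 r * zo x p0.1 r0 p.2 r) := by
      intro p _
      refine Finset.sum_nonneg fun r _ => ?_
      have := mul_le_mul (hle p.1 r) (hle p.2 r) (bin_nonneg hy p.2 r) (bin_nonneg hx p.1 r)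
      linarith
    have hmain : (1:ℝ) ≤ ∑ r, (x p0.1 r * x p0.2 r - zo x p0.1 r0 p0.1 r * zo x p0.1 r0 p0.2 r) := by
      have hr0 : x p0.1 r0 * x p0.2 r0 - zo x p0.1 r0 p0.1 r0 * zo x p0.1 r0 p0.2 r0 = 1 := by
        rw [h1, h2, zo_self]; ring
      calc (1:ℝ) = x p0.1 r0 * x p0.2 r0 - zo x p0.1 r0 p0.1 r0 * zo x p0.1 r0 p0.2 r0 := hr0.symm
        _ ≤ _ := Finset.single_le_sum (f := fun r => x p0.1 r * x p0.2 r - zo x p0.1 r0 p0.1 r * zo x p0.1 r0 p0.2 r)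
            (fun r _ => by
              have := mul_le_mul (hle p0.1 r) (hle p0.2 r) (bin_nonneg hy p0.2 r) (bin_nonneg hx p0.1 r)
              linarith) (Finset.mem_univ r0)
    calc (1:ℝ) ≤ _ := hmain
      _ ≤ _ := Finset.single_le_sum (f := fun p => ∑ r, (x p.1 r * x p.2 r - zo x p0.1 r0 p.1 r * zo x p0.1 r0 p.2 r)) hterm hp0
  have heq : PS1 E x - PS1 E (zo x p0.1 r0) = ∑ p ∈ E, (∑ r, (x p.1 r * x p.2 r - zo x p0.1 r0 p.1 r * zo x p0.1 r0 p.2 r)) := by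
    unfold PS1
    rw [← Finset.sum_sub_distrib]
    exact Finset.sum_congr rfl fun p _ => by rw [← Finset.sum_sub_distrib]
  linarith

lemma PS2_drop {x : Fin n → Fin k → ℝ} (hx : MkBin x)
    {i0 : Fin n} {r0 p0 : Fin k} (hne : p0 ≠ r0)
    (h1 : x i0 r0 = 1) (h2 : x i0 p0 = 1) :
    PS2 (zo x i0 r0) + 1 ≤ PS2 x := by
  set y := zo x i0 r0 with hy_def
  have hy : MkBin y := zo_bin hx i0 r0
  have hle : ∀ i r, y i r ≤ x i r := zo_le hx i0 r0
  have hnn : ∀ (i : Fin n) (r p : Fin k), 0 ≤ x i r * x i p - y i r * y i p := by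
    intro i r p
    have := mul_le_mul (hle i r) (hle i p) (bin_nonneg hy i p) (bin_nonneg hx i r)
    linarith
  have h3 : (1:ℝ) ≤ ∑ p ∈ Finset.univ.filter (fun p => p ≠ r0), (x i0 r0 * x i0 p - y i0 r0 * y i0 p) := by
    have hmem : p0 ∈ Finset.univ.filter (fun p => p ≠ r0) := by simp [hne]
    have hv : x i0 r0 * x i0 p0 - y i0 r0 * y i0 p0 = 1 := by
      rw [h1, h2, hy_def, zo_self]; ring
    calc (1:ℝ) = _ := hv.symm
      _ ≤ _ := Finset.single_le_sum (f := fun p => x i0 r0 * x i0 p - y i0 r0 * y i0 p)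
        (fun p _ => hnn i0 r0 p) hmem
  have h4 : (1:ℝ) ≤ ∑ r, ∑ p ∈ Finset.univ.filter (fun p => p ≠ r), (x i0 r * x i0 p - y i0 r * y i0 p) :=
    le_trans h3 (Finset.single_le_sum
      (f := fun r => ∑ p ∈ Finset.univ.filter (fun p => p ≠ r), (x i0 r * x i0 p - y i0 r * y i0 p))
      (fun r _ => Finset.sum_nonneg fun p _ => hnn i0 r p)
      (Finset.mem_univ r0))
  have h5 : (1:ℝ) ≤ ∑ i, ∑ r, ∑ p ∈ Finset.univ.filter (fun p => p ≠ r), (x i r * x i p - y i r * y i p) :=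
    le_trans h4 (Finset.single_le_sum
      (f := fun i => ∑ r, ∑ p ∈ Finset.univ.filter (fun p => p ≠ r), (x i r * x i p - y i r * y i p))
      (fun i _ => Finset.sum_nonneg fun r _ => Finset.sum_nonneg fun p _ => hnn i r p)
      (Finset.mem_univ i0))
  have heq : PS2 x - PS2 y = ∑ i, ∑ r, ∑ p ∈ Finset.univ.filter (fun p => p ≠ r), (x i r * x i p - y i r * y i p) := by
    unfold PS2
    rw [← Finset.sum_sub_distrib]
    refine Finset.sum_congr rfl fun i _ => ?_
    rw [← Finset.sum_sub_distrib]
    refine Finset.sum_congr rfl fun r _ => ?_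
    rw [← Finset.sum_sub_distrib]
  linarith

/-- support of a binary point -/
noncomputable def supp (x : Fin n → Fin k → ℝ) : Finset (Fin n × Fin k) :=
  Finset.univ.filter (fun q => x q.1 q.2 = 1)

lemma supp_mem {x : Fin n → Fin k → ℝ} {i0 : Fin n} {r0 : Fin k} (h1 : x i0 r0 = 1) :
    (i0, r0) ∈ supp x := by simp [supp, h1]

lemma zo_card {x : Fin n → Fin k → ℝ} {i0 : Fin n} {r0 : Fin k} (h1 : x i0 r0 = 1) :
    (supp (zo x i0 r0)).card < (supp x).card := by
  have hmem : (i0, r0) ∈ supp x := supp_mem h1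
  have hsub : supp (zo x i0 r0) ⊆ (supp x).erase (i0, r0) := by
    intro q hq
    have hq1 : zo x i0 r0 q.1 q.2 = 1 := by simpa [supp] using hq
    have hne : ¬(q.1 = i0 ∧ q.2 = r0) := by
      rintro ⟨ha, hb⟩
      rw [ha, hb, zo_self] at hq1
      norm_num at hq1
    rw [Finset.mem_erase]
    constructor
    · rintro rfl
      exact hne ⟨rfl, rfl⟩
    · rw [zo_ne x hne] at hq1
      simp [supp, hq1]
  calc (supp (zo x i0 r0)).card ≤ ((supp x).erase (i0, r0)).card := Finset.card_le_card hsub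
    _ < (supp x).card := Finset.card_erase_lt_of_mem hmem

/-- extraction of a violated constraint from an infeasible binary point -/
lemma violation {E : Finset (Fin n × Fin n)} {x : Fin n → Fin k → ℝ} (hx : MkBin x)
    (hnf : ¬ MkFeas E x) :
    (∃ p ∈ E, ∃ r : Fin k, x p.1 r = 1 ∧ x p.2 r = 1) ∨
    (∃ i : Fin n, ∃ r p : Fin k, p ≠ r ∧ x i r = 1 ∧ x i p = 1) := by
  classical
  unfold MkFeas at hnf
  push_neg at hnf
  by_cases hA : ∀ p ∈ E, ∀ r : Fin k, x p.1 r + x p.2 r ≤ 1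
  case neg =>
    push_neg at hA
    obtain ⟨p, hp, r, hr⟩ := hA
    left
    refine ⟨p, hp, r, ?_, ?_⟩
    · rcases hx p.1 r with h1 | h1
      · exfalso
        rcases hx p.2 r with h2 | h2 <;> rw [h1, h2] at hr <;> norm_num at hr
      · exact h1
    · rcases hx p.2 r with h2 | h2
      · exfalso
        rcases hx p.1 r with h1 | h1 <;> rw [h1, h2] at hr <;> norm_num at hr
      · exact h2
  case pos =>
    obtain ⟨i, hi⟩ := hnf hA
    right
    have hsum : (∑ r, x i r) = ∑ r, (if x i r = 1 then (1:ℝ) else 0) :=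
      Finset.sum_congr rfl fun r _ => by rcases hx i r with h1 | h1 <;> simp [h1]
    rw [hsum, Finset.sum_boole] at hi
    have hcard := Nat.cast_lt (α := ℝ) |>.mp (by exact_mod_cast hi)
    obtain ⟨a, ha, b, hb, hab⟩ := Finset.one_lt_card.mp hcard
    exact ⟨i, a, b, hab.symm, (Finset.mem_filter.mp ha).2, (Finset.mem_filter.mp hb).2⟩

/-- repairing a binary point into a feasible one without decreasing `Hn` past `MkObj`. -/
lemma repair (E : Finset (Fin n × Fin n)) (c1 c2 : ℝ) (hc1 : 1 ≤ c1) (hc2 : 1 ≤ c2) :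
    ∀ N : ℕ, ∀ x : Fin n → Fin k → ℝ, MkBin x → (supp x).card ≤ N →
      ∃ x' : Fin n → Fin k → ℝ, MkBin x' ∧ MkFeas E x' ∧ (∀ i r, x' i r ≤ x i r) ∧
        Hn c1 c2 E x ≤ MkObj x' := by
  have hc1' : (0:ℝ) ≤ c1 := le_trans zero_le_one hc1
  have hc2' : (0:ℝ) ≤ c2 := le_trans zero_le_one hc2
  intro N
  induction N with
  | zero =>
    intro x hx hcard
    by_cases hfeas : MkFeas E x
    · exact ⟨x, hx, hfeas, fun i r => le_refl _, Hn_le_obj hc1' hc2' E hx⟩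
    · exfalso
      have hpos : 0 < (supp x).card := by
        rcases violation hx hfeas with ⟨p, _, r, h1, _⟩ | ⟨i, r, _, _, h1, _⟩ <;>
          exact Finset.card_pos.mpr ⟨_, supp_mem h1⟩
      omega
  | succ N ih =>
    intro x hx hcard
    by_cases hfeas : MkFeas E x
    · exact ⟨x, hx, hfeas, fun i r => le_refl _, Hn_le_obj hc1' hc2' E hx⟩
    rcases violation hx hfeas with ⟨p, hp, r, h1, h2⟩ | ⟨i, r, p, hne, h1, h2⟩
    · -- edge conflict: zero out (p.1, r)
      have hy : MkBin (zo x p.1 r) := zo_bin hx p.1 r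
      have hyle : ∀ i' r', zo x p.1 r i' r' ≤ x i' r' := zo_le hx p.1 r
      have hycard : (supp (zo x p.1 r)).card ≤ N := by have := zo_card h1; omega
      obtain ⟨x', hb, hf, hle, hobj⟩ := ih (zo x p.1 r) hy hycard
      refine ⟨x', hb, hf, fun i' r' => le_trans (hle i' r') (hyle i' r'), ?_⟩
      have hHn : Hn c1 c2 E x ≤ Hn c1 c2 E (zo x p.1 r) := by
        rw [Hn_eq, Hn_eq, zo_obj h1]
        have hs1 := PS1_drop E hx hp h1 h2
        have hs2 := PS2_mono hx hy hyle
        have m1 := mul_le_mul_of_nonneg_left hs1 hc1'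
        have m2 := mul_le_mul_of_nonneg_left hs2 hc2'
        nlinarith
      linarith
    · -- color conflict: zero out (i, r)
      have hy : MkBin (zo x i r) := zo_bin hx i r
      have hyle : ∀ i' r', zo x i r i' r' ≤ x i' r' := zo_le hx i r
      have hycard : (supp (zo x i r)).card ≤ N := by have := zo_card h1; omega
      obtain ⟨x', hb, hf, hle, hobj⟩ := ih (zo x i r) hy hycard
      refine ⟨x', hb, hf, fun i' r' => le_trans (hle i' r') (hyle i' r'), ?_⟩
      have hHn : Hn c1 c2 E x ≤ Hn c1 c2 E (zo x i r) := by
        rw [Hn_eq, Hn_eq, zo_obj h1]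
        have hs2 := PS2_drop hx hne h1 h2
        have hs1 := PS1_mono E hx hy hyle
        have m1 := mul_le_mul_of_nonneg_left hs1 hc1'
        have m2 := mul_le_mul_of_nonneg_left hs2 hc2'
        nlinarith
      linarith

end AuxRepair

/-- If (c1 = 1 and c2 >= 1) or (c1 >= 1 and c2 = 1) and xt maximizes H^n over
binary points, then there is an MkCS-feasible x' with x' <= xt entrywise and objective alpha_k(G). -/
theorem stmt_3 (n k : ℕ) (hk : 1 ≤ k) (E : Finset (Fin n × Fin n)) (hE : SimpleEdges E)
    (c1 c2 : ℝ) (hc : (c1 = 1 ∧ 1 ≤ c2) ∨ (1 ≤ c1 ∧ c2 = 1)) (α : ℝ)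
    (hα : IsGreatest {v : ℝ | ∃ x : Fin n → Fin k → ℝ, MkBin x ∧ MkFeas E x ∧ MkObj x = v} α)
    (xt : Fin n → Fin k → ℝ) (hxt : MkBin xt)
    (hmax : ∀ x : Fin n → Fin k → ℝ, MkBin x → Hn c1 c2 E x ≤ Hn c1 c2 E xt) :
    ∃ x' : Fin n → Fin k → ℝ, MkBin x' ∧ MkFeas E x' ∧
      (∀ i r, x' i r ≤ xt i r) ∧ MkObj x' = α := by
  have hc1 : 1 ≤ c1 := by rcases hc with ⟨h, _⟩ | ⟨h, _⟩
                          · exact h.ge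
                          · exact h
  have hc2 : 1 ≤ c2 := by rcases hc with ⟨_, h⟩ | ⟨_, h⟩
                          · exact h
                          · exact h.ge
  obtain ⟨hmem, hub⟩ := hα
  obtain ⟨x0, hb0, hf0, hobj0⟩ := hmem
  have hαHn : α ≤ Hn c1 c2 E xt := by
    have h := hmax x0 hb0
    rwa [Hn_feas c1 c2 E hb0 hf0, hobj0] at h
  obtain ⟨x', hb, hf, hle, hobj⟩ :=
    repair E c1 c2 hc1 hc2 (supp xt).card xt hxt le_rfl
  have hx'α : MkObj x' ≤ α := hub ⟨x', hb, hf, rfl⟩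
  exact ⟨x', hb, hf, hle, le_antisymm hx'α (le_trans hαHn hobj)⟩
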